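/- arXiv:2308.13025 — 3 statements merged into one kernel-verified Lean document; each statement's English description precedes it below -/
import Mathlib

section
/- For any pair (m, r) with m a positive integer and r ∈ {0, 1, …, m}, there exist a positive integer l and orthogonal matrices A_1, …, A_m ∈ O(l) such that A_iA_j + A_jA_i = 2η_{ij}E_l for all i, j ∈ {1, …, m}, where (η_{ij}) := J_{r,m−r}. -/
open Matrix

noncomputable section

/-- Entries of the signature matrix `J_{r,m-r}`, with 1-based indices:
`η_{ii} = -1` for `1 ≤ i ≤ r` and `η_{ii} = 1` for `r < i`; off-diagonal entries vanish. -/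
def cliffEta (r i j : ℕ) : ℝ :=
  if i = j then (if i ≤ r then -1 else 1) else 0

/-- The matrix `J_{s,n-s} = diag(-E_s, E_{n-s})`. -/
def psJ (n s : ℕ) : Matrix (Fin n) (Fin n) ℝ :=
  Matrix.diagonal fun i => if (i : ℕ) < s then (-1 : ℝ) else 1

/-- The pseudo-inner product `⟨u, v⟩ = uᵀ J_{s,n-s} v` of `ℝ^n_s`. -/
def psInner (n s : ℕ) (u v : Fin n → ℝ) : ℝ :=
  u ⬝ᵥ ((psJ n s) *ᵥ v)

/-- A Clifford system of signature `(m, r)` on `ℝ^{2l}_s`, indexed by `1, …, m`: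
each `P i` is symmetric with respect to the pseudo-inner product, and
`P i * P j + P j * P i = 2 η_{ij} E_{2l}`. -/
def IsCliffordSystem (l s m r : ℕ)
    (P : ℕ → Matrix (Fin (2 * l)) (Fin (2 * l)) ℝ) : Prop :=
  (∀ i ∈ Finset.Icc 1 m, (P i)ᵀ = psJ (2 * l) s * P i * psJ (2 * l) s) ∧
  (∀ i ∈ Finset.Icc 1 m, ∀ j ∈ Finset.Icc 1 m,
    P i * P j + P j * P i
      = (2 * cliffEta r i j) • (1 : Matrix (Fin (2 * l)) (Fin (2 * l)) ℝ))

/-! Build the family on `ℝ^(2^k)` one generator at a time. If `A_1, …, A_k` satisfy the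
Clifford relations and each `A_i` is symmetric or skew according to the sign `η_{ii}`, then
`A_i ⊗ σ_z` together with `E ⊗ [[0, η], [1, 0]]` do so for `k + 1` generators, because
`[[0, η], [1, 0]]` squares to `η E` and anticommutes with `σ_z = diag(1, -1)`. Symmetry or
skewness of a generator `A` with `A² = ±E` makes it orthogonal. -/

open Kronecker

def pauliZ : Matrix (Fin 2) (Fin 2) ℝ := !![1, 0; 0, -1]

def signedSwap (c : ℝ) : Matrix (Fin 2) (Fin 2) ℝ := !![0, c; 1, 0]

lemma pauliZ_transpose : pauliZᵀ = pauliZ := by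
  ext i j; fin_cases i <;> fin_cases j <;> simp [pauliZ]

lemma pauliZ_mul_self : pauliZ * pauliZ = 1 := by
  simp [pauliZ, Matrix.one_fin_two]

lemma signedSwap_mul_self (c : ℝ) : signedSwap c * signedSwap c = c • 1 := by
  simp [signedSwap, Matrix.one_fin_two]

lemma signedSwap_transpose {c : ℝ} (hc : c * c = 1) : (signedSwap c)ᵀ = c • signedSwap c := by
  ext i j; fin_cases i <;> fin_cases j <;> simp [signedSwap, hc]

lemma signedSwap_mul_pauliZ_add (c : ℝ) : signedSwap c * pauliZ + pauliZ * signedSwap c = 0 := by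
  ext i j; fin_cases i <;> fin_cases j <;> simp [signedSwap, pauliZ]

lemma cliffEta_mul_self (r i : ℕ) : cliffEta r i i * cliffEta r i i = 1 := by
  simp only [cliffEta, if_true]; split_ifs <;> norm_num

lemma cliffEta_of_ne (r : ℕ) {i j : ℕ} (h : i ≠ j) : cliffEta r i j = 0 := if_neg h

section

variable {n p : Type*} [Fintype n] [DecidableEq n] [Fintype p] [DecidableEq p]

structure IsCliffordFamily (r k : ℕ) (A : ℕ → Matrix n n ℝ) : Prop where
  transpose_eq : ∀ i ∈ Finset.Icc 1 k, (A i)ᵀ = cliffEta r i i • A i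
  anticomm : ∀ i ∈ Finset.Icc 1 k, ∀ j ∈ Finset.Icc 1 k,
    A i * A j + A j * A i = (2 * cliffEta r i j) • (1 : Matrix n n ℝ)

def cliffordExtend (r k : ℕ) (A : ℕ → Matrix n n ℝ) (i : ℕ) :
    Matrix (n × Fin 2) (n × Fin 2) ℝ :=
  if i = k + 1 then 1 ⊗ₖ signedSwap (cliffEta r i i) else A i ⊗ₖ pauliZ

namespace IsCliffordFamily

variable {r k : ℕ} {A : ℕ → Matrix n n ℝ}

lemma mul_self (hA : IsCliffordFamily r k A) {i : ℕ} (hi : i ∈ Finset.Icc 1 k) :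
    A i * A i = cliffEta r i i • 1 := by
  have h := hA.anticomm i hi i hi
  rw [← two_smul ℝ, mul_smul] at h
  exact smul_right_injective _ two_ne_zero h

lemma transpose_mul_self (hA : IsCliffordFamily r k A) {i : ℕ} (hi : i ∈ Finset.Icc 1 k) :
    (A i)ᵀ * A i = 1 := by
  rw [hA.transpose_eq i hi, Matrix.smul_mul, hA.mul_self hi, smul_smul, cliffEta_mul_self,
    one_smul]

lemma reindex (hA : IsCliffordFamily r k A) (e : n ≃ p) :
    IsCliffordFamily r k fun i => Matrix.reindexAlgEquiv ℝ ℝ e (A i) where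
  transpose_eq i hi := by
    rw [Matrix.coe_reindexAlgEquiv, Matrix.transpose_reindex, hA.transpose_eq i hi,
      ← Matrix.coe_reindexAlgEquiv ℝ ℝ, map_smul]
  anticomm i hi j hj := by
    rw [← map_mul, ← map_mul, ← map_add, hA.anticomm i hi j hj, map_smul, map_one]

lemma extend (hA : IsCliffordFamily r k A) : IsCliffordFamily r (k + 1) (cliffordExtend r k A) := by
  set B := cliffordExtend r k A
  have mem_Icc_succ : ∀ {i}, i ∈ Finset.Icc 1 (k + 1) →
      i = k + 1 ∨ i ∈ Finset.Icc 1 k := by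
    intro i hi
    simp only [Finset.mem_Icc] at hi ⊢
    omega
  have B_new : B (k + 1) = 1 ⊗ₖ signedSwap (cliffEta r (k + 1) (k + 1)) := if_pos rfl
  have ne_succ : ∀ i ∈ Finset.Icc 1 k, i ≠ k + 1 := by
    intro i hi
    simp only [Finset.mem_Icc] at hi
    omega
  have B_old : ∀ i ∈ Finset.Icc 1 k, B i = A i ⊗ₖ pauliZ := fun i hi => if_neg (ne_succ i hi)
  have anticomm_new : ∀ i ∈ Finset.Icc 1 k, B i * B (k + 1) + B (k + 1) * B i = 0 := by
    intro i hi
    rw [B_old i hi, B_new, ← mul_kronecker_mul, ← mul_kronecker_mul, mul_one, one_mul,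
      ← kronecker_add, add_comm, signedSwap_mul_pauliZ_add, kronecker_zero]
  refine ⟨fun i hi => ?_, fun i hi j hj => ?_⟩
  · rcases mem_Icc_succ hi with rfl | hi
    · rw [B_new, ← kroneckerMap_transpose, transpose_one,
        signedSwap_transpose (cliffEta_mul_self r _), kronecker_smul]
    · rw [B_old i hi, ← kroneckerMap_transpose, pauliZ_transpose, hA.transpose_eq i hi,
        smul_kronecker]
  · rcases mem_Icc_succ hi with rfl | hi <;> rcases mem_Icc_succ hj with rfl | hj
    · rw [← two_smul ℝ, mul_smul, B_new, ← mul_kronecker_mul, one_mul, signedSwap_mul_self,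
        kronecker_smul, one_kronecker_one]
    · rw [add_comm, anticomm_new j hj, cliffEta_of_ne r (ne_succ j hj).symm, mul_zero, zero_smul]
    · rw [anticomm_new i hi, cliffEta_of_ne r (ne_succ i hi), mul_zero, zero_smul]
    · rw [B_old i hi, B_old j hj, ← mul_kronecker_mul, ← mul_kronecker_mul, pauliZ_mul_self,
        ← add_kronecker, hA.anticomm i hi j hj, smul_kronecker, one_kronecker_one]

end IsCliffordFamily

end

def cliffordGenerators (r : ℕ) : (k : ℕ) → ℕ → Matrix (Fin (2 ^ k)) (Fin (2 ^ k)) ℝ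
  | 0 => fun _ => 1
  | k + 1 => fun i => Matrix.reindexAlgEquiv ℝ ℝ
      (finProdFinEquiv.trans (finCongr (pow_succ 2 k).symm))
      (cliffordExtend r k (cliffordGenerators r k) i)

lemma isCliffordFamily_cliffordGenerators (r k : ℕ) :
    IsCliffordFamily r k (cliffordGenerators r k) := by
  induction k with
  | zero => exact ⟨by simp, by simp⟩
  | succ k ih => exact ih.extend.reindex _

theorem exists_orthogonal_anticommuting_family_general (m r : ℕ) :
    ∃ l : ℕ, 0 < l ∧ ∃ A : ℕ → Matrix (Fin l) (Fin l) ℝ,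
      (∀ i ∈ Finset.Icc 1 m, (A i)ᵀ * A i = 1) ∧
      (∀ i ∈ Finset.Icc 1 m, ∀ j ∈ Finset.Icc 1 m,
        A i * A j + A j * A i = (2 * cliffEta r i j) • (1 : Matrix (Fin l) (Fin l) ℝ)) := by
  have hA := isCliffordFamily_cliffordGenerators r m
  exact ⟨2 ^ m, by positivity, cliffordGenerators r m, fun i hi => hA.transpose_mul_self hi,
    hA.anticomm⟩

/-- For any pair `(m, r)` with `m` a positive integer and `r ∈ {0, …, m}`,
there exist a positive integer `l` and orthogonal matrices `A_1, …, A_m ∈ O(l)` with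
`A_i A_j + A_j A_i = 2 η_{ij} E_l`, where `(η_{ij}) = J_{r,m-r}`. -/
theorem exists_orthogonal_anticommuting_family (m r : ℕ) (hm : 0 < m) (hr : r ≤ m) :
    ∃ l : ℕ, 0 < l ∧ ∃ A : ℕ → Matrix (Fin l) (Fin l) ℝ,
      (∀ i ∈ Finset.Icc 1 m, (A i)ᵀ * A i = 1) ∧
      (∀ i ∈ Finset.Icc 1 m, ∀ j ∈ Finset.Icc 1 m,
        A i * A j + A j * A i = (2 * cliffEta r i j) • (1 : Matrix (Fin l) (Fin l) ℝ)) :=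
  exists_orthogonal_anticommuting_family_general m r
end
end

section
/- Let m be a positive integer and suppose A_1, …, A_m ∈ O(l) satisfy A_iA_j + A_jA_i = 2η_{ij}E_l for all i, j, where (η_{ij}) := J_{0,m} = E_m (i.e. the A_i pairwise anticommute and square to E_l). Then there exist B_1, …, B_{m+2} ∈ O(4l) satisfying B_iB_j + B_jB_i = 2η'_{ij}E_{4l} for all i, j ∈ {1, …, m+2}, where (η'_{ij}) := J_{m+2,0} = −E_{m+2} (i.e. the B_j pairwise anticommute and square to −E_{4l}). -/
open Matrix

noncomputable section

/-!
Tensor the given family with the quaternion units. With `I, J, K` the matrices of left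
multiplication by `i, j, k` on `ℍ ≅ ℝ⁴`, put `B_i = K ⊗ A_i` for `i ≤ m`, `B_{m+1} = I ⊗ E_l`
and `B_{m+2} = J ⊗ E_l`. Since `K² = -1`, the relations `A_i A_j + A_j A_i = 2δ_{ij}` turn into
`B_i B_j + B_j B_i = -2δ_{ij}`, and the new members anticommute with all others because `K`
anticommutes with `I` and `J` while `E_l` commutes with every `A_i`.
-/

open Kronecker

def Anticommute {α : Type*} [Mul α] [Add α] [Zero α] (a b : α) : Prop :=
  a * b + b * a = 0

section Quaternion

variable {R : Type*} [CommRing R]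

/-- Left multiplication by `i` on `ℍ` in the basis `1, i, j, k`; likewise `quatJ`, `quatK`. -/
def quatI : Matrix (Fin 4) (Fin 4) R :=
  !![0, -1, 0, 0; 1, 0, 0, 0; 0, 0, 0, -1; 0, 0, 1, 0]

def quatJ : Matrix (Fin 4) (Fin 4) R :=
  !![0, 0, -1, 0; 0, 0, 0, 1; 1, 0, 0, 0; 0, -1, 0, 0]

def quatK : Matrix (Fin 4) (Fin 4) R :=
  !![0, 0, 0, -1; 0, 0, -1, 0; 0, 1, 0, 0; 1, 0, 0, 0]

theorem quatI_mul_self : quatI * quatI = (-1 : Matrix (Fin 4) (Fin 4) R) := by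
  ext i j; fin_cases i <;> fin_cases j <;> simp [quatI, mul_apply, Fin.sum_univ_four]

theorem quatJ_mul_self : quatJ * quatJ = (-1 : Matrix (Fin 4) (Fin 4) R) := by
  ext i j; fin_cases i <;> fin_cases j <;> simp [quatJ, mul_apply, Fin.sum_univ_four]

theorem quatK_mul_self : quatK * quatK = (-1 : Matrix (Fin 4) (Fin 4) R) := by
  ext i j; fin_cases i <;> fin_cases j <;> simp [quatK, mul_apply, Fin.sum_univ_four]

theorem anticommute_quatI_quatJ : Anticommute (quatI : Matrix (Fin 4) (Fin 4) R) quatJ := by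
  ext i j; fin_cases i <;> fin_cases j <;> simp [quatI, quatJ]

theorem anticommute_quatK_quatI : Anticommute (quatK : Matrix (Fin 4) (Fin 4) R) quatI := by
  ext i j; fin_cases i <;> fin_cases j <;> simp [quatK, quatI]

theorem anticommute_quatK_quatJ : Anticommute (quatK : Matrix (Fin 4) (Fin 4) R) quatJ := by
  ext i j; fin_cases i <;> fin_cases j <;> simp [quatK, quatJ]

theorem transpose_quatI_mul_quatI : (quatI : Matrix (Fin 4) (Fin 4) R)ᵀ * quatI = 1 := by
  ext i j; fin_cases i <;> fin_cases j <;> simp [quatI, mul_apply, Fin.sum_univ_four]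

theorem transpose_quatJ_mul_quatJ : (quatJ : Matrix (Fin 4) (Fin 4) R)ᵀ * quatJ = 1 := by
  ext i j; fin_cases i <;> fin_cases j <;> simp [quatJ, mul_apply, Fin.sum_univ_four]

theorem transpose_quatK_mul_quatK : (quatK : Matrix (Fin 4) (Fin 4) R)ᵀ * quatK = 1 := by
  ext i j; fin_cases i <;> fin_cases j <;> simp [quatK, mul_apply, Fin.sum_univ_four]

end Quaternion

section Kronecker

variable {R : Type*} [CommRing R] {m n : Type*} [Fintype m] [Fintype n]

theorem transpose_kronecker_mul_self_eq_one [DecidableEq m] [DecidableEq n] {g : Matrix m m R}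
    {P : Matrix n n R} (hg : gᵀ * g = 1) (hP : Pᵀ * P = 1) : (g ⊗ₖ P)ᵀ * (g ⊗ₖ P) = 1 := by
  rw [← kroneckerMap_transpose, ← mul_kronecker_mul, hg, hP, one_kronecker_one]

theorem Anticommute.kronecker {g h : Matrix m m R} {P Q : Matrix n n R}
    (hgh : Anticommute g h) (hPQ : Commute P Q) : Anticommute (g ⊗ₖ P) (h ⊗ₖ Q) := by
  rw [Anticommute, ← mul_kronecker_mul, ← mul_kronecker_mul, hPQ.eq, ← add_kronecker, hgh,
    zero_kronecker]

theorem kronecker_mul_kronecker_add_of_mul_self_eq_neg_one [DecidableEq m] [DecidableEq n]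
    {g : Matrix m m R} {P Q : Matrix n n R} {c : R} (hg : g * g = -1)
    (hPQ : P * Q + Q * P = c • 1) :
    (g ⊗ₖ P) * (g ⊗ₖ Q) + (g ⊗ₖ Q) * (g ⊗ₖ P) = (-c) • 1 := by
  rw [← mul_kronecker_mul, ← mul_kronecker_mul, ← kronecker_add, hPQ, hg, kronecker_smul,
    ← neg_one_smul R (1 : Matrix m m R), smul_kronecker, one_kronecker_one, smul_smul,
    mul_neg_one]

end Kronecker

theorem two_mul_cliffEta_zero_of_pos {i : ℕ} (hi : 0 < i) (j : ℕ) :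
    2 * cliffEta 0 i j = if i = j then 2 else 0 := by
  unfold cliffEta
  split_ifs <;> first | omega | norm_num

theorem two_mul_cliffEta_of_le {r i : ℕ} (hi : i ≤ r) (j : ℕ) :
    2 * cliffEta r i j = if i = j then -2 else 0 := by
  unfold cliffEta
  split_ifs <;> first | omega | norm_num

section StepUp

variable {R : Type*} [CommRing R] {n : Type*} [DecidableEq n]

def stepUp (m : ℕ) (A : ℕ → Matrix n n R) (i : ℕ) : Matrix (Fin 4 × n) (Fin 4 × n) R :=
  if i ≤ m then quatK ⊗ₖ A i else if i = m + 1 then quatI ⊗ₖ 1 else quatJ ⊗ₖ 1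

variable {m : ℕ} {A : ℕ → Matrix n n R}

theorem stepUp_of_le {i : ℕ} (hi : i ≤ m) : stepUp m A i = quatK ⊗ₖ A i := if_pos hi

theorem stepUp_add_one : stepUp m A (m + 1) = quatI ⊗ₖ 1 := by simp [stepUp]

theorem stepUp_add_two : stepUp m A (m + 2) = quatJ ⊗ₖ 1 := by simp [stepUp]

theorem transpose_stepUp_mul_self [Fintype n]
    (hA : ∀ i ∈ Finset.Icc 1 m, (A i)ᵀ * A i = 1) {i : ℕ} (hi : i ∈ Finset.Icc 1 (m + 2)) :
    (stepUp m A i)ᵀ * stepUp m A i = 1 := by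
  rw [Finset.mem_Icc] at hi
  obtain hi' | rfl | rfl : i ≤ m ∨ i = m + 1 ∨ i = m + 2 := by omega
  · rw [stepUp_of_le hi']
    exact transpose_kronecker_mul_self_eq_one transpose_quatK_mul_quatK
      (hA i (Finset.mem_Icc.2 ⟨hi.1, hi'⟩))
  · rw [stepUp_add_one]
    exact transpose_kronecker_mul_self_eq_one transpose_quatI_mul_quatI (by simp)
  · rw [stepUp_add_two]
    exact transpose_kronecker_mul_self_eq_one transpose_quatJ_mul_quatJ (by simp)

theorem stepUp_mul_add_mul [Fintype n]
    (hA : ∀ i ∈ Finset.Icc 1 m, ∀ j ∈ Finset.Icc 1 m,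
      A i * A j + A j * A i = (if i = j then (2 : R) else 0) • 1)
    {i j : ℕ} (hi : i ∈ Finset.Icc 1 (m + 2)) (hj : j ∈ Finset.Icc 1 (m + 2)) :
    stepUp m A i * stepUp m A j + stepUp m A j * stepUp m A i
      = (if i = j then (-2 : R) else 0) • 1 := by
  wlog hij : i ≤ j generalizing i j
  · rw [add_comm, this hj hi (by omega), if_neg (by omega), if_neg (by omega)]
  rw [Finset.mem_Icc] at hi hj
  have one_mul_one_add : (1 : Matrix n n R) * 1 + 1 * 1 = (2 : R) • 1 := by
    rw [one_mul, two_smul]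
  obtain hi' | rfl | rfl : i ≤ m ∨ i = m + 1 ∨ i = m + 2 := by omega
  · rw [stepUp_of_le hi']
    obtain hj' | rfl | rfl : j ≤ m ∨ j = m + 1 ∨ j = m + 2 := by omega
    · rw [stepUp_of_le hj', kronecker_mul_kronecker_add_of_mul_self_eq_neg_one quatK_mul_self
        (hA i (Finset.mem_Icc.2 ⟨hi.1, hi'⟩) j (Finset.mem_Icc.2 ⟨hj.1, hj'⟩)),
        apply_ite Neg.neg, neg_zero]
    · rw [stepUp_add_one, if_neg (by omega), zero_smul]
      exact anticommute_quatK_quatI.kronecker (Commute.one_right _)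
    · rw [stepUp_add_two, if_neg (by omega), zero_smul]
      exact anticommute_quatK_quatJ.kronecker (Commute.one_right _)
  · rw [stepUp_add_one]
    obtain rfl | rfl : j = m + 1 ∨ j = m + 2 := by omega
    · rw [stepUp_add_one, kronecker_mul_kronecker_add_of_mul_self_eq_neg_one quatI_mul_self
        one_mul_one_add, if_pos rfl]
    · rw [stepUp_add_two, if_neg (by omega), zero_smul]
      exact anticommute_quatI_quatJ.kronecker (Commute.one_right _)
  · obtain rfl : j = m + 2 := by omega
    rw [stepUp_add_two, kronecker_mul_kronecker_add_of_mul_self_eq_neg_one quatJ_mul_self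
      one_mul_one_add, if_pos rfl]

end StepUp

theorem step_up_all_negative_general (m l : ℕ)
    (A : ℕ → Matrix (Fin l) (Fin l) ℝ)
    (hAo : ∀ i ∈ Finset.Icc 1 m, (A i)ᵀ * A i = 1)
    (hAc : ∀ i ∈ Finset.Icc 1 m, ∀ j ∈ Finset.Icc 1 m,
      A i * A j + A j * A i = (2 * cliffEta 0 i j) • (1 : Matrix (Fin l) (Fin l) ℝ)) :
    ∃ B : ℕ → Matrix (Fin (4 * l)) (Fin (4 * l)) ℝ,
      (∀ i ∈ Finset.Icc 1 (m + 2), (B i)ᵀ * B i = 1) ∧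
      (∀ i ∈ Finset.Icc 1 (m + 2), ∀ j ∈ Finset.Icc 1 (m + 2),
        B i * B j + B j * B i
          = (2 * cliffEta (m + 2) i j) • (1 : Matrix (Fin (4 * l)) (Fin (4 * l)) ℝ)) := by
  have hA : ∀ i ∈ Finset.Icc 1 m, ∀ j ∈ Finset.Icc 1 m,
      A i * A j + A j * A i = (if i = j then (2 : ℝ) else 0) • 1 := fun i hi j hj => by
    rw [hAc i hi j hj, two_mul_cliffEta_zero_of_pos (Finset.mem_Icc.1 hi).1]
  refine ⟨fun i => reindexAlgEquiv ℝ ℝ finProdFinEquiv (stepUp m A i), fun i hi => ?_,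
    fun i hi j hj => ?_⟩
  · rw [coe_reindexAlgEquiv, transpose_reindex, ← coe_reindexAlgEquiv ℝ ℝ, ← map_mul,
      transpose_stepUp_mul_self hAo hi, map_one]
  · rw [← map_mul, ← map_mul, ← map_add, stepUp_mul_add_mul hA hi hj,
      two_mul_cliffEta_of_le (Finset.mem_Icc.1 hi).2, map_smul, map_one]

/-- from a family for `(m, 0)` on `O(l)` one obtains a family for
`(m+2, m+2)` on `O(4l)`. -/
theorem step_up_all_negative (m l : ℕ) (hm : 0 < m) (hl : 0 < l)
    (A : ℕ → Matrix (Fin l) (Fin l) ℝ)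
    (hAo : ∀ i ∈ Finset.Icc 1 m, (A i)ᵀ * A i = 1)
    (hAc : ∀ i ∈ Finset.Icc 1 m, ∀ j ∈ Finset.Icc 1 m,
      A i * A j + A j * A i = (2 * cliffEta 0 i j) • (1 : Matrix (Fin l) (Fin l) ℝ)) :
    ∃ B : ℕ → Matrix (Fin (4 * l)) (Fin (4 * l)) ℝ,
      (∀ i ∈ Finset.Icc 1 (m + 2), (B i)ᵀ * B i = 1) ∧
      (∀ i ∈ Finset.Icc 1 (m + 2), ∀ j ∈ Finset.Icc 1 (m + 2),
        B i * B j + B j * B i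
          = (2 * cliffEta (m + 2) i j) • (1 : Matrix (Fin (4 * l)) (Fin (4 * l)) ℝ)) :=
  step_up_all_negative_general m l A hAo hAc
end
end

section
/- Let P_1, …, P_m be a Clifford system of signature (m, r) on ℝ^{2l}_s with r ≡ 0 (mod 2). Let p ≡ 0 (mod 4) with p ≥ 4, let q be odd with q + p − 1 ≤ m, and set Q := P_qP_{q+1}⋯P_{q+p−1}. Then: (i) the eigenvalues of Q are exactly −1 and 1; (ii) ℝ^{2l} = E_+(Q) ⊕ E_−(Q), where E_±(Q) are the eigenspaces of Q for ±1, and this decomposition is orthogonal with respect to ⟨·,·⟩ (i.e. ⟨u,v⟩ = 0 for u ∈ E_+(Q), v ∈ E_−(Q)); (iii) dim E_+(Q) = dim E_−(Q) = l; (iv) the restriction of ⟨·,·⟩ to each of E_+(Q) and E_−(Q) is nondegenerate. -/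
/-!
The factors `P_q, …, P_{q+p-1}` pairwise anticommute and square to the scalars `η_{ii}`.
Reversing a product of `k` anticommuting factors costs the sign `(-1)^(k choose 2)`, which is `+1`
for `k = p ≡ 0 (mod 4)`. Hence `Qᵀ = J Q J`, and `Q² = P_{q+p-1} ⋯ P_q · P_q ⋯ P_{q+p-1}`
telescopes to `∏ η_{ii} = 1`, the factors with `η_{ii} = -1` coming in pairs `(i, i + 1)` since
`q` is odd and `r` even. So `Q` is a `⟨·,·⟩`-symmetric involution: `ℝ^{2l} = E₊ ⊕ E₋`, the two
eigenspaces are `⟨·,·⟩`-orthogonal, and nondegeneracy of `⟨·,·⟩` passes to each of them.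
Finally `P_{q+p-1}` is invertible and anticommutes with `Q` (it anticommutes with the odd number
`p - 1` of other factors), so it maps `E₊` injectively into `E₋` and back: `dim E₊ = dim E₋ = l`.
-/

open Matrix

noncomputable section

section Anticommute

variable {A : Type*} [Ring A]

theorem List.mul_prod_of_forall_anticommute {x : A} {l : List A}
    (h : ∀ y ∈ l, x * y = -(y * x)) : x * l.prod = (-1 : ℤ) ^ l.length • (l.prod * x) := by
  induction l with
  | nil => simp
  | cons y l ih =>
    rw [List.forall_mem_cons] at h
    rw [List.prod_cons, ← mul_assoc, h.1, neg_mul, mul_assoc, ih h.2, mul_smul_comm,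
      List.length_cons, pow_succ, mul_neg_one, neg_smul, mul_assoc]

theorem List.prod_mul_of_forall_anticommute {x : A} {l : List A}
    (h : ∀ y ∈ l, x * y = -(y * x)) : l.prod * x = (-1 : ℤ) ^ l.length • (x * l.prod) := by
  rw [List.mul_prod_of_forall_anticommute h, smul_smul, ← pow_add, ← two_mul, pow_mul,
    neg_one_sq, one_pow, one_smul]

theorem List.prod_reverse_of_pairwise_anticommute {l : List A}
    (h : l.Pairwise fun x y => x * y = -(y * x)) :
    l.reverse.prod = (-1 : ℤ) ^ l.length.choose 2 • l.prod := by
  induction l with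
  | nil => simp
  | cons x l ih =>
    rw [List.pairwise_cons] at h
    rw [List.reverse_cons, List.prod_append, List.prod_singleton, ih h.2, smul_mul_assoc,
      List.prod_mul_of_forall_anticommute h.1, smul_smul, ← pow_add, List.length_cons,
      Nat.choose_succ_succ', Nat.choose_one_right, add_comm, List.prod_cons]

end Anticommute

theorem List.prod_reverse_map_mul_prod_map {M R ι : Type*} [Monoid M] [Monoid R] [MulAction R M]
    [IsScalarTower R M M] [SMulCommClass R M M] (f : ι → M) (c : ι → R) {l : List ι}
    (h : ∀ i ∈ l, f i * f i = c i • 1) :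
    (l.map f).reverse.prod * (l.map f).prod = (l.map c).prod • 1 := by
  induction l with
  | nil => simp
  | cons i l ih =>
    rw [List.forall_mem_cons] at h
    rw [List.map_cons, List.reverse_cons, List.prod_append, List.prod_singleton, List.prod_cons,
      mul_assoc, ← mul_assoc (f i), h.1, smul_mul_assoc, one_mul, mul_smul_comm, ih h.2,
      smul_smul, List.map_cons, List.prod_cons]

theorem Matrix.transpose_list_prod_of_forall_transpose_eq {m α : Type*} [Fintype m]
    [DecidableEq m] [CommSemiring α] {J : Matrix m m α} (hJ : J * J = 1)
    {l : List (Matrix m m α)} (h : ∀ x ∈ l, xᵀ = J * x * J) :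
    l.prodᵀ = J * l.reverse.prod * J := by
  induction l with
  | nil => simp [hJ]
  | cons x l ih =>
    rw [List.forall_mem_cons] at h
    rw [List.prod_cons, transpose_mul, ih h.2, h.1, List.reverse_cons, List.prod_append,
      List.prod_singleton]
    simp only [mul_assoc]
    rw [← mul_assoc J J, hJ, one_mul]

theorem Nat.even_choose_two_of_four_dvd {n : ℕ} (h : 4 ∣ n) : Even (n.choose 2) := by
  obtain ⟨t, rfl⟩ := h
  rw [Nat.choose_two_right, show 4 * t * (4 * t - 1) = 2 * (2 * (t * (4 * t - 1))) by ring,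
    Nat.mul_div_cancel_left _ two_pos]
  exact even_two_mul _

section PseudoInner

variable {n s : ℕ}

theorem psJ_transpose : (psJ n s)ᵀ = psJ n s := diagonal_transpose _

theorem psJ_mul_self : psJ n s * psJ n s = 1 := by
  rw [psJ, diagonal_mul_diagonal, ← diagonal_one]
  congr 1
  ext i
  split_ifs <;> norm_num

theorem psInner_comm (u v : Fin n → ℝ) : psInner n s u v = psInner n s v u := by
  rw [psInner, psInner, dotProduct_mulVec, ← vecMul_transpose, psJ_transpose, dotProduct_comm]

theorem psInner_add_right (u v w : Fin n → ℝ) :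
    psInner n s u (v + w) = psInner n s u v + psInner n s u w := by
  rw [psInner, mulVec_add, dotProduct_add, psInner, psInner]

theorem eq_zero_of_forall_psInner_eq_zero {u : Fin n → ℝ} (h : ∀ v, psInner n s u v = 0) :
    u = 0 := by
  have h' := h (psJ n s *ᵥ u)
  rwa [psInner, mulVec_mulVec, psJ_mul_self, one_mulVec, dotProduct_self_eq_zero] at h'

theorem eq_zero_of_psInner_eq_zero_of_codisjoint {E F : Submodule ℝ (Fin n → ℝ)}
    (hEF : Codisjoint E F) {u : Fin n → ℝ} (hE : ∀ v ∈ E, psInner n s u v = 0)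
    (hF : ∀ w ∈ F, psInner n s u w = 0) : u = 0 := by
  refine eq_zero_of_forall_psInner_eq_zero (s := s) fun z => ?_
  obtain ⟨v, hv, w, hw, rfl⟩ := Submodule.mem_sup.mp (hEF.eq_top ▸ Submodule.mem_top : z ∈ E ⊔ F)
  rw [psInner_add_right, hE v hv, hF w hw, add_zero]

variable {Q : Matrix (Fin n) (Fin n) ℝ}

theorem psInner_mulVec_left (hQ : Qᵀ = psJ n s * Q * psJ n s) (u v : Fin n → ℝ) :
    psInner n s (Q *ᵥ u) v = psInner n s u (Q *ᵥ v) := by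
  rw [psInner, psInner, ← vecMul_transpose, ← dotProduct_mulVec, mulVec_mulVec, hQ, mul_assoc,
    mul_assoc, psJ_mul_self, mul_one, mulVec_mulVec]

theorem psInner_eq_zero_of_mulVec_eq_smul (hQ : Qᵀ = psJ n s * Q * psJ n s) {μ ν : ℝ}
    (hμν : μ ≠ ν) {u v : Fin n → ℝ} (hu : Q *ᵥ u = μ • u) (hv : Q *ᵥ v = ν • v) :
    psInner n s u v = 0 := by
  have h : (μ - ν) * psInner n s u v = 0 := by
    have hQuv := psInner_mulVec_left hQ u v
    rw [hu, hv] at hQuv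
    simp only [psInner, smul_dotProduct, mulVec_smul, dotProduct_smul, smul_eq_mul] at hQuv ⊢
    linarith
  exact (mul_eq_zero.mp h).resolve_left (sub_ne_zero.mpr hμν)

end PseudoInner

namespace Module.End

section CommRing

variable {R M : Type*} [CommRing R] [AddCommGroup M] [Module R M] {S T : Module.End R M}

theorem mapsTo_eigenspace_neg_of_anticommute (hST : S * T = -(T * S)) (μ : R) :
    ∀ x ∈ eigenspace T μ, S x ∈ eigenspace T (-μ) := by
  intro x hx
  rw [mem_eigenspace_iff] at hx ⊢
  have hSTx := congrArg (· x) hST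
  simp only [mul_apply, LinearMap.neg_apply, hx, map_smul] at hSTx
  rw [neg_smul, hSTx, neg_neg]

end CommRing

variable {K V : Type*} [Field K] [AddCommGroup V] [Module K V] {S T : Module.End K V}

theorem eq_one_or_eq_neg_one_of_mul_self_eq_one (hT : T * T = 1) {μ : K} {x : V}
    (hx : x ∈ eigenspace T μ) (hx0 : x ≠ 0) : μ = 1 ∨ μ = -1 := by
  rw [mem_eigenspace_iff] at hx
  have hμx : (μ * μ - 1) • x = 0 := by
    rw [sub_smul, one_smul, mul_smul, ← hx, ← map_smul, ← hx, ← mul_apply, hT, one_apply, sub_self]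
  exact mul_self_eq_one_iff.mp (sub_eq_zero.mp ((smul_eq_zero.mp hμx).resolve_right hx0))

theorem isCompl_eigenspace_one_neg_one [NeZero (2 : K)] (hT : T * T = 1) :
    IsCompl (eigenspace T 1) (eigenspace T (-1)) := by
  refine ⟨Submodule.disjoint_def.mpr fun x h₁ h₂ => ?_,
    codisjoint_iff.mpr (eq_top_iff.mpr fun x _ => ?_)⟩
  · rw [mem_eigenspace_iff] at h₁ h₂
    have h2x : (2 : K) • x = 0 := by
      rw [two_smul]
      nth_rw 1 [← one_smul K x]
      rw [← h₁, h₂, neg_one_smul, neg_add_cancel]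
    exact (smul_eq_zero.mp h2x).resolve_left two_ne_zero
  · have hTx : T (T x) = x := by rw [← mul_apply, hT, one_apply]
    refine Submodule.mem_sup.mpr
      ⟨(2 : K)⁻¹ • (x + T x), ?_, (2 : K)⁻¹ • (x - T x), ?_, ?_⟩
    · rw [mem_eigenspace_iff, map_smul, map_add, hTx, one_smul, add_comm]
    · rw [mem_eigenspace_iff, map_smul, map_sub, hTx, neg_one_smul, ← smul_neg, neg_sub]
    · rw [← smul_add, add_add_sub_cancel, ← two_smul K, smul_smul, inv_mul_cancel₀ two_ne_zero,
        one_smul]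

theorem injective_of_mul_self_eq_smul_one {c : K} (hc : c ≠ 0) (h : S * S = c • 1) :
    Function.Injective S := by
  intro x y hxy
  have hSSxy := congrArg S hxy
  rw [← mul_apply, ← mul_apply, h] at hSSxy
  simpa [hc] using hSSxy

theorem finrank_eigenspace_le_of_anticommute [FiniteDimensional K V] (hS : Function.Injective S)
    (hST : S * T = -(T * S)) (μ : K) :
    Module.finrank K (eigenspace T μ) ≤ Module.finrank K (eigenspace T (-μ)) :=
  LinearMap.finrank_le_finrank_of_injective
    (f := S.restrict (mapsTo_eigenspace_neg_of_anticommute hST μ))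
    fun _ _ hxy => Subtype.ext (hS (congrArg Subtype.val hxy))

theorem two_mul_finrank_eigenspace_eq_finrank [NeZero (2 : K)] [FiniteDimensional K V]
    (hT : T * T = 1) (hS : Function.Injective S) (hST : S * T = -(T * S)) :
    2 * Module.finrank K (eigenspace T 1) = Module.finrank K V ∧
      2 * Module.finrank K (eigenspace T (-1)) = Module.finrank K V := by
  have hsum := Submodule.finrank_add_eq_of_isCompl (isCompl_eigenspace_one_neg_one hT)
  have h₁ := finrank_eigenspace_le_of_anticommute hS hST 1
  have h₂ := finrank_eigenspace_le_of_anticommute hS hST (-1)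
  rw [neg_neg] at h₂
  omega

end Module.End

theorem Submodule.existsUnique_prod_mem_add_of_isCompl {R M : Type*} [Ring R] [AddCommGroup M]
    [Module R M] {E F : Submodule R M} (h : IsCompl E F) (x : M) :
    ∃! w : M × M, w.1 ∈ E ∧ w.2 ∈ F ∧ x = w.1 + w.2 := by
  obtain ⟨u, v, huv, huniq⟩ := Submodule.existsUnique_add_of_isCompl h x
  refine ⟨(u, v), ⟨u.2, v.2, huv.symm⟩, ?_⟩
  rintro ⟨a, b⟩ ⟨ha, hb, rfl⟩
  obtain ⟨hau, hbv⟩ := huniq ⟨a, ha⟩ ⟨b, hb⟩ rfl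
  exact Prod.ext (congrArg Subtype.val hau) (congrArg Subtype.val hbv)

theorem Submodule.exists_ne_zero_mem_of_finrank_ne_zero {K V : Type*} [DivisionRing K]
    [AddCommGroup V] [Module K V] {p : Submodule K V} (h : Module.finrank K p ≠ 0) :
    ∃ x, x ≠ 0 ∧ x ∈ p :=
  (Submodule.exists_mem_ne_zero_of_ne_bot fun hp => h (by rw [hp, finrank_bot])).imp
    fun _ => And.symm

namespace Matrix

variable {R n : Type*} [CommRing R] [Fintype n] [DecidableEq n]

theorem toLin'_mul_toLin' (A B : Matrix n n R) : toLin' A * toLin' B = toLin' (A * B) :=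
  (toLin'_mul A B).symm

variable {Q : Matrix n n R} {x : n → R}

theorem mem_eigenspace_toLin'_iff {μ : R} :
    x ∈ Module.End.eigenspace (toLin' Q) μ ↔ Q *ᵥ x = μ • x := by
  rw [Module.End.mem_eigenspace_iff, toLin'_apply]

theorem mem_eigenspace_toLin'_one_iff : x ∈ Module.End.eigenspace (toLin' Q) 1 ↔ Q *ᵥ x = x := by
  rw [mem_eigenspace_toLin'_iff, one_smul]

theorem mem_eigenspace_toLin'_neg_one_iff :
    x ∈ Module.End.eigenspace (toLin' Q) (-1) ↔ Q *ᵥ x = -x := by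
  rw [mem_eigenspace_toLin'_iff, neg_one_smul]

end Matrix

theorem cliffEta_mul_cliffEta_succ {r i : ℕ} (hr : Even r) (hi : Odd i) :
    cliffEta r i i * cliffEta r (i + 1) (i + 1) = 1 := by
  rw [Nat.even_iff] at hr
  rw [Nat.odd_iff] at hi
  simp only [cliffEta, if_true]
  split_ifs <;> (try norm_num) <;> omega

theorem list_prod_map_cliffEta_range {r q n : ℕ} (hr : Even r) (hq : Odd q) (hn : Even n) :
    ((List.range n).map fun k => cliffEta r (q + k) (q + k)).prod = 1 := by
  obtain ⟨t, rfl⟩ := hn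
  induction t with
  | zero => simp
  | succ t ih =>
    rw [show t + 1 + (t + 1) = t + t + 1 + 1 by ring, List.range_succ, List.range_succ,
      List.map_append, List.map_append, List.prod_append, List.prod_append, ih, one_mul]
    simpa [mul_comm, add_assoc] using cliffEta_mul_cliffEta_succ hr (hq.add_even ⟨t, rfl⟩)

theorem add_mem_Icc_of_lt {q p m k : ℕ} (hq : 1 ≤ q) (hqp : q + p - 1 ≤ m) (hk : k < p) :
    q + k ∈ Finset.Icc 1 m := by
  rw [Finset.mem_Icc]
  omega

namespace IsCliffordSystem

variable {l s m r q p : ℕ} {P : ℕ → Matrix (Fin (2 * l)) (Fin (2 * l)) ℝ}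

theorem mul_self (hP : IsCliffordSystem l s m r P) {i : ℕ} (hi : i ∈ Finset.Icc 1 m) :
    P i * P i = cliffEta r i i • 1 := by
  have h := hP.2 i hi i hi
  rw [← two_smul ℝ, mul_smul] at h
  exact smul_right_injective _ two_ne_zero h

theorem anticommute (hP : IsCliffordSystem l s m r P) {i j : ℕ} (hi : i ∈ Finset.Icc 1 m)
    (hj : j ∈ Finset.Icc 1 m) (hij : i ≠ j) : P i * P j = -(P j * P i) := by
  have h := hP.2 i hi j hj
  rw [cliffEta, if_neg hij, mul_zero, zero_smul] at h
  exact eq_neg_of_add_eq_zero_left h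

theorem injective_toLin' (hP : IsCliffordSystem l s m r P) {i : ℕ} (hi : i ∈ Finset.Icc 1 m) :
    Function.Injective (toLin' (P i)) := by
  refine Module.End.injective_of_mul_self_eq_smul_one (c := cliffEta r i i) ?_ ?_
  · simp only [cliffEta, if_true]
    split_ifs <;> norm_num
  · rw [toLin'_mul_toLin', hP.mul_self hi, map_smul, toLin'_one, Module.End.one_eq_id]

theorem prod_reverse_factors (hP : IsCliffordSystem l s m r P) (hq : 1 ≤ q)
    (hqp : q + p - 1 ≤ m) (hp : 4 ∣ p) :
    ((List.range p).map fun k => P (q + k)).reverse.prod =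
      ((List.range p).map fun k => P (q + k)).prod := by
  have hpair : ((List.range p).map fun k => P (q + k)).Pairwise fun x y => x * y = -(y * x) :=
    List.pairwise_map.mpr <| List.nodup_range.imp_of_mem fun ha hb hab =>
      hP.anticommute (add_mem_Icc_of_lt hq hqp (List.mem_range.mp ha))
        (add_mem_Icc_of_lt hq hqp (List.mem_range.mp hb)) (by omega)
  rw [List.prod_reverse_of_pairwise_anticommute hpair, List.length_map, List.length_range,
    (Nat.even_choose_two_of_four_dvd hp).neg_one_pow, one_smul]

theorem prod_factors_mul_self (hP : IsCliffordSystem l s m r P) (hr : Even r) (hq : Odd q)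
    (hqp : q + p - 1 ≤ m) (hp : 4 ∣ p) :
    ((List.range p).map fun k => P (q + k)).prod * ((List.range p).map fun k => P (q + k)).prod
      = 1 := by
  nth_rw 1 [← hP.prod_reverse_factors hq.pos hqp hp]
  rw [List.prod_reverse_map_mul_prod_map _ (fun k => cliffEta r (q + k) (q + k))
      fun k hk => hP.mul_self (add_mem_Icc_of_lt hq.pos hqp (List.mem_range.mp hk)),
    list_prod_map_cliffEta_range hr hq (even_iff_two_dvd.mpr (dvd_trans (by norm_num) hp)),
    one_smul]

theorem transpose_prod_factors (hP : IsCliffordSystem l s m r P) (hq : 1 ≤ q)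
    (hqp : q + p - 1 ≤ m) (hp : 4 ∣ p) :
    ((List.range p).map fun k => P (q + k)).prodᵀ =
      psJ (2 * l) s * ((List.range p).map fun k => P (q + k)).prod * psJ (2 * l) s := by
  rw [transpose_list_prod_of_forall_transpose_eq psJ_mul_self
      (List.forall_mem_map.mpr fun k hk =>
        hP.1 _ (add_mem_Icc_of_lt hq hqp (List.mem_range.mp hk))),
    hP.prod_reverse_factors hq hqp hp]

theorem last_mul_prod_factors (hP : IsCliffordSystem l s m r P) (hq : 1 ≤ q)
    (hqp : q + p - 1 ≤ m) (hp : Even p) (hp0 : p ≠ 0) :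
    P (q + (p - 1)) * ((List.range p).map fun k => P (q + k)).prod =
      -(((List.range p).map fun k => P (q + k)).prod * P (q + (p - 1))) := by
  obtain ⟨n, rfl⟩ := Nat.exists_eq_succ_of_ne_zero hp0
  have hn : Odd n := by simpa [Nat.even_add_one] using hp
  have hanti : ∀ y ∈ (List.range n).map fun k => P (q + k), P (q + n) * y = -(y * P (q + n)) := by
    refine List.forall_mem_map.mpr fun k hk => ?_
    rw [List.mem_range] at hk
    exact hP.anticommute (add_mem_Icc_of_lt hq hqp n.lt_succ_self)
      (add_mem_Icc_of_lt hq hqp (hk.trans n.lt_succ_self)) (by omega)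
  rw [Nat.succ_sub_one, List.range_succ, List.map_append, List.prod_append, List.map_singleton,
    List.prod_singleton, ← mul_assoc, List.mul_prod_of_forall_anticommute hanti, List.length_map,
    List.length_range, hn.neg_one_pow, neg_one_smul, neg_mul, mul_assoc]

end IsCliffordSystem

theorem clifford_product_eigendecomposition_general (l s m r q p : ℕ) (hl : 0 < l)
    (hr2 : r % 2 = 0)
    (P : ℕ → Matrix (Fin (2 * l)) (Fin (2 * l)) ℝ)
    (hP : IsCliffordSystem l s m r P)
    (hq : q % 2 = 1) (hp4 : p % 4 = 0) (hp : 4 ≤ p) (hqp : q + p - 1 ≤ m)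
    (Q : Matrix (Fin (2 * l)) (Fin (2 * l)) ℝ)
    (hQ : Q = ((List.range p).map fun k => P (q + k)).prod) :
    -- (i) the eigenvalues of Q are exactly -1 and 1
    ((∃ z : Fin (2 * l) → ℝ, z ≠ 0 ∧ Q *ᵥ z = z) ∧
     (∃ z : Fin (2 * l) → ℝ, z ≠ 0 ∧ Q *ᵥ z = -z) ∧
     (∀ (μ : ℝ) (z : Fin (2 * l) → ℝ), z ≠ 0 → Q *ᵥ z = μ • z → μ = 1 ∨ μ = -1)) ∧
    -- (ii) unique eigendecomposition, orthogonal for the pseudo-inner product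
    (∀ z : Fin (2 * l) → ℝ, ∃! w : (Fin (2 * l) → ℝ) × (Fin (2 * l) → ℝ),
      Q *ᵥ w.1 = w.1 ∧ Q *ᵥ w.2 = -w.2 ∧ z = w.1 + w.2) ∧
    (∀ u v : Fin (2 * l) → ℝ, Q *ᵥ u = u → Q *ᵥ v = -v → psInner (2 * l) s u v = 0) ∧
    -- (iii) both eigenspaces are l-dimensional
    (Module.finrank ℝ (Module.End.eigenspace (Matrix.toLin' Q) 1) = l ∧
     Module.finrank ℝ (Module.End.eigenspace (Matrix.toLin' Q) (-1)) = l) ∧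
    -- (iv) the pseudo-inner product is nondegenerate on each eigenspace
    ((∀ u : Fin (2 * l) → ℝ, Q *ᵥ u = u →
        (∀ v : Fin (2 * l) → ℝ, Q *ᵥ v = v → psInner (2 * l) s u v = 0) → u = 0) ∧
     (∀ u : Fin (2 * l) → ℝ, Q *ᵥ u = -u →
        (∀ v : Fin (2 * l) → ℝ, Q *ᵥ v = -v → psInner (2 * l) s u v = 0) → u = 0)) := by
  have hq' : Odd q := Nat.odd_iff.mpr hq
  have hp' : 4 ∣ p := Nat.dvd_of_mod_eq_zero hp4
  have hQQ : toLin' Q * toLin' Q = 1 := by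
    rw [toLin'_mul_toLin', hQ, hP.prod_factors_mul_self (Nat.even_iff.mpr hr2) hq' hqp hp',
      toLin'_one, Module.End.one_eq_id]
  have hQJ : Qᵀ = psJ (2 * l) s * Q * psJ (2 * l) s :=
    hQ ▸ hP.transpose_prod_factors hq'.pos hqp hp'
  have hR := hP.injective_toLin' (add_mem_Icc_of_lt hq'.pos hqp (by omega : p - 1 < p))
  have hRQ : toLin' (P (q + (p - 1))) * toLin' Q = -(toLin' Q * toLin' (P (q + (p - 1)))) := by
    rw [toLin'_mul_toLin', toLin'_mul_toLin', hQ,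
      hP.last_mul_prod_factors hq'.pos hqp (Nat.even_iff.mpr (by omega)) (by omega), map_neg]
  have hcompl := Module.End.isCompl_eigenspace_one_neg_one hQQ
  obtain ⟨hrank₁, hrank₂⟩ := Module.End.two_mul_finrank_eigenspace_eq_finrank hQQ hR hRQ
  rw [Module.finrank_fin_fun] at hrank₁ hrank₂
  have horth : ∀ u ∈ Module.End.eigenspace (toLin' Q) 1,
      ∀ v ∈ Module.End.eigenspace (toLin' Q) (-1), psInner (2 * l) s u v = 0 := fun u hu v hv =>
    psInner_eq_zero_of_mulVec_eq_smul hQJ (by norm_num) (mem_eigenspace_toLin'_iff.mp hu)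
      (mem_eigenspace_toLin'_iff.mp hv)
  simp only [← mem_eigenspace_toLin'_one_iff, ← mem_eigenspace_toLin'_neg_one_iff,
    ← mem_eigenspace_toLin'_iff]
  exact ⟨⟨Submodule.exists_ne_zero_mem_of_finrank_ne_zero (by omega),
      Submodule.exists_ne_zero_mem_of_finrank_ne_zero (by omega),
      fun μ z hz0 hz => Module.End.eq_one_or_eq_neg_one_of_mul_self_eq_one hQQ hz hz0⟩,
    Submodule.existsUnique_prod_mem_add_of_isCompl hcompl, fun u v hu hv => horth u hu v hv,
    ⟨by omega, by omega⟩,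
    fun u hu hE => eq_zero_of_psInner_eq_zero_of_codisjoint hcompl.codisjoint hE (horth u hu),
    fun u hu hE => eq_zero_of_psInner_eq_zero_of_codisjoint hcompl.symm.codisjoint hE
      fun w hw => psInner_comm u w ▸ horth w hw u hu⟩

/-- for a Clifford system of signature `(m, r)` with `r` even, and
`p ≡ 0 (mod 4)`, `p ≥ 4`, `q` odd with `q + p - 1 ≤ m`, set
`Q = P_q P_{q+1} ⋯ P_{q+p-1}`. Then (i) the eigenvalues of `Q` are exactly `-1` and `1`;
(ii) every vector decomposes uniquely as a sum of a `+1`- and a `-1`-eigenvector, and the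
decomposition is orthogonal for `⟨·,·⟩`; (iii) both eigenspaces have dimension `l`;
(iv) `⟨·,·⟩` restricts nondegenerately to each eigenspace. -/
theorem clifford_product_eigendecomposition (l s m r q p : ℕ) (hl : 0 < l)
    (hs : s ≤ 2 * l) (hm : 2 ≤ m) (hr : r ≤ m) (hr2 : r % 2 = 0)
    (P : ℕ → Matrix (Fin (2 * l)) (Fin (2 * l)) ℝ)
    (hP : IsCliffordSystem l s m r P)
    (hq : q % 2 = 1) (hp4 : p % 4 = 0) (hp : 4 ≤ p) (hqp : q + p - 1 ≤ m)
    (Q : Matrix (Fin (2 * l)) (Fin (2 * l)) ℝ)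
    (hQ : Q = ((List.range p).map fun k => P (q + k)).prod) :
    -- (i) the eigenvalues of Q are exactly -1 and 1
    ((∃ z : Fin (2 * l) → ℝ, z ≠ 0 ∧ Q *ᵥ z = z) ∧
     (∃ z : Fin (2 * l) → ℝ, z ≠ 0 ∧ Q *ᵥ z = -z) ∧
     (∀ (μ : ℝ) (z : Fin (2 * l) → ℝ), z ≠ 0 → Q *ᵥ z = μ • z → μ = 1 ∨ μ = -1)) ∧
    -- (ii) unique eigendecomposition, orthogonal for the pseudo-inner product
    (∀ z : Fin (2 * l) → ℝ, ∃! w : (Fin (2 * l) → ℝ) × (Fin (2 * l) → ℝ),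
      Q *ᵥ w.1 = w.1 ∧ Q *ᵥ w.2 = -w.2 ∧ z = w.1 + w.2) ∧
    (∀ u v : Fin (2 * l) → ℝ, Q *ᵥ u = u → Q *ᵥ v = -v → psInner (2 * l) s u v = 0) ∧
    -- (iii) both eigenspaces are l-dimensional
    (Module.finrank ℝ (Module.End.eigenspace (Matrix.toLin' Q) 1) = l ∧
     Module.finrank ℝ (Module.End.eigenspace (Matrix.toLin' Q) (-1)) = l) ∧
    -- (iv) the pseudo-inner product is nondegenerate on each eigenspace
    ((∀ u : Fin (2 * l) → ℝ, Q *ᵥ u = u →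
        (∀ v : Fin (2 * l) → ℝ, Q *ᵥ v = v → psInner (2 * l) s u v = 0) → u = 0) ∧
     (∀ u : Fin (2 * l) → ℝ, Q *ᵥ u = -u →
        (∀ v : Fin (2 * l) → ℝ, Q *ᵥ v = -v → psInner (2 * l) s u v = 0) → u = 0)) :=
  clifford_product_eigendecomposition_general l s m r q p hl hr2 P hP hq hp4 hp hqp Q hQ
end
end
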